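/- arXiv:2410.11980 — 7 statements merged into one kernel-verified Lean document; each statement's English description precedes it below -/
import Mathlib

section
/- Let k ≥ 1 and let S be a binary string of length k. Write S·0 and S·1 for the strings of length k+1 obtained by appending the bit 0, respectively the bit 1, to the end of S. If S·0 has some period p₀ satisfying 2·p₀ ≤ k, then every period p₁ of S·1 satisfies 2·p₁ ≥ k. -/
/-- `p` is a period of the binary string `w` of length `n`:
`1 ≤ p ≤ n` and `w i = w (i + p)` whenever `i + p < n`. -/
def IsPeriod {n : ℕ} (w : Fin n → Bool) (p : ℕ) : Prop :=
  1 ≤ p ∧ p ≤ n ∧ ∀ i : ℕ, (h : i + p < n) →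
    w ⟨i, Nat.lt_of_le_of_lt (Nat.le_add_right i p) h⟩ = w ⟨i + p, h⟩

/-- The string of length `k+1` obtained by appending the bit `b` to the end of `S`. -/
def appendBit {k : ℕ} (S : Fin k → Bool) (b : Bool) : Fin (k + 1) → Bool :=
  fun i => if h : (i : ℕ) < k then S ⟨i, h⟩ else b

private lemma seqEqAux {k : ℕ} (S : Fin k → Bool) {a b : ℕ} (ha : a < k) (hb : b < k)
    (h : a = b) : S ⟨a, ha⟩ = S ⟨b, hb⟩ := by subst h; rfl

theorem stmt0 (k : ℕ) (hk : 1 ≤ k) (S : Fin k → Bool)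
    (h0 : ∃ p₀ : ℕ, IsPeriod (appendBit S false) p₀ ∧ 2 * p₀ ≤ k) :
    ∀ p₁ : ℕ, IsPeriod (appendBit S true) p₁ → k ≤ 2 * p₁ := by
  rintro p₁ ⟨hp₁1, hp₁le, hper1⟩
  obtain ⟨p₀, ⟨hp₀1, hp₀le, hper0⟩, hp₀k⟩ := h0
  by_contra hcon
  push_neg at hcon
  have hsum : p₀ + p₁ ≤ k := by omega
  -- S (k - p₀) = false
  have h1 : S ⟨k - p₀, by omega⟩ = false := by
    have h := hper0 (k - p₀) (by omega)
    unfold appendBit at h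
    rwa [dif_pos (show k - p₀ < k by omega),
      dif_neg (show ¬ (k - p₀ + p₀ < k) by omega)] at h
  -- S (k - p₁) = true
  have h2 : S ⟨k - p₁, by omega⟩ = true := by
    have h := hper1 (k - p₁) (by omega)
    unfold appendBit at h
    rwa [dif_pos (show k - p₁ < k by omega),
      dif_neg (show ¬ (k - p₁ + p₁ < k) by omega)] at h
  -- S j = S (k - p₁) via period p₀
  have h3 : S ⟨k - p₀ - p₁, by omega⟩ = S ⟨k - p₁, by omega⟩ := by
    have h := hper0 (k - p₀ - p₁) (by omega)
    unfold appendBit at h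
    rw [dif_pos (show k - p₀ - p₁ < k by omega),
      dif_pos (show k - p₀ - p₁ + p₀ < k by omega)] at h
    refine h.trans (seqEqAux S _ _ ?_)
    show k - p₀ - p₁ + p₀ = k - p₁
    omega
  -- S j = S (k - p₀) via period p₁
  have h4 : S ⟨k - p₀ - p₁, by omega⟩ = S ⟨k - p₀, by omega⟩ := by
    have h := hper1 (k - p₀ - p₁) (by omega)
    unfold appendBit at h
    rw [dif_pos (show k - p₀ - p₁ < k by omega),
      dif_pos (show k - p₀ - p₁ + p₁ < k by omega)] at h
    refine h.trans (seqEqAux S _ _ ?_)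
    show k - p₀ - p₁ + p₁ = k - p₀
    omega
  rw [h3, h2] at h4
  rw [h1] at h4
  exact absurd h4 (by simp)
end

section
/- For every k ≥ 1 and every binary string S of length k, at least one of the two strings S·0 and S·1 of length k+1 (obtained by appending a 0, respectively a 1, to the end of S) has the property that every one of its periods p satisfies 2·p ≥ k. -/
theorem stmt2 (k : ℕ) (hk : 1 ≤ k) (S : Fin k → Bool) :
    (∀ p : ℕ, IsPeriod (appendBit S false) p → k ≤ 2 * p) ∨
    (∀ p : ℕ, IsPeriod (appendBit S true) p → k ≤ 2 * p) := by
  by_contra h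
  push_neg at h
  obtain ⟨⟨p, ⟨hp1, hpn, hpP⟩, hpk⟩, ⟨q, ⟨hq1, hqn, hqP⟩, hqk⟩⟩ := h
  have e1 := hpP (k - p - q) (by omega)
  have e2 := hpP (k - p) (by omega)
  have e3 := hqP (k - p - q) (by omega)
  have e4 := hqP (k - q) (by omega)
  simp only [appendBit] at e1 e2 e3 e4
  rw [dif_pos (show k - p - q < k by omega), dif_pos (show k - p - q + p < k by omega)] at e1
  rw [dif_pos (show k - p < k by omega), dif_neg (show ¬ (k - p + p < k) by omega)] at e2
  rw [dif_pos (show k - p - q < k by omega), dif_pos (show k - p - q + q < k by omega)] at e3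
  rw [dif_pos (show k - q < k by omega), dif_neg (show ¬ (k - q + q < k) by omega)] at e4
  have h1 : (⟨k - p - q + p, by omega⟩ : Fin k) = ⟨k - q, by omega⟩ := by
    apply Fin.ext; simp; omega
  have h2 : (⟨k - p - q + q, by omega⟩ : Fin k) = ⟨k - p, by omega⟩ := by
    apply Fin.ext; simp; omega
  rw [h1] at e1
  rw [h2] at e3
  rw [e4] at e1
  rw [e2] at e3
  rw [e1] at e3
  simp at e3
end

section
/- Let S ≥ 1, let Λ be an invertible S×S real matrix that is row-stochastic (all entries nonnegative and each row sums to 1), let Λ₁,…,Λ_ℓ be S×S real matrices, let q₁,…,q_ℓ ∈ ℝ, and let ε ≥ 0 be such that every row of the matrix M = Λ⁻¹ − Σ_{m=1}^{ℓ} q_m·Λ_m has ℓ¹-norm at most ε, i.e., for every row index i, Σ_j |M(i,j)| ≤ ε. Let C ≥ 0, let f : Fin S → ℝ satisfy |f(s)| ≤ C for all s, and let μ ∈ ℝ^S be a probability vector (all entries nonnegative, summing to 1). Then |Σ_s μ(s)·f(s) − Σ_{m=1}^{ℓ} q_m · Σ_s (μᵀ·Λ·Λ_m)(s)·f(s)|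 ≤ ε·C, where μᵀ·Λ·Λ_m denotes the row vector obtained by multiplying μ (as a row vector) by Λ and then by Λ_m. -/
open Matrix

theorem stmt3 (S ℓ : ℕ) (hS : 1 ≤ S)
    (Λ : Matrix (Fin S) (Fin S) ℝ) (hΛinv : IsUnit Λ.det)
    (hΛnn : ∀ i j, 0 ≤ Λ i j) (hΛrow : ∀ i, ∑ j, Λ i j = 1)
    (Λs : Fin ℓ → Matrix (Fin S) (Fin S) ℝ) (q : Fin ℓ → ℝ)
    (ε : ℝ) (hε : 0 ≤ ε)
    (hM : ∀ i, ∑ j, |(Λ⁻¹ - ∑ m, q m • Λs m) i j| ≤ ε)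
    (C : ℝ) (hC : 0 ≤ C) (f : Fin S → ℝ) (hf : ∀ s, |f s| ≤ C)
    (μ : Fin S → ℝ) (hμnn : ∀ s, 0 ≤ μ s) (hμsum : ∑ s, μ s = 1) :
    |(∑ s, μ s * f s) - ∑ m, q m * ∑ s, ((μ ᵥ* Λ) ᵥ* Λs m) s * f s| ≤ ε * C := by
  set ν : Fin S → ℝ := μ ᵥ* Λ with hν
  set M : Matrix (Fin S) (Fin S) ℝ := Λ⁻¹ - ∑ m, q m • Λs m with hMdef
  have hνnn : ∀ i, 0 ≤ ν i := by
    intro i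
    simp only [hν, vecMul, dotProduct]
    exact Finset.sum_nonneg fun s _ => mul_nonneg (hμnn s) (hΛnn s i)
  have hνsum : ∑ i, ν i = 1 := by
    rw [hν]
    simp only [vecMul, dotProduct]
    rw [Finset.sum_comm]
    calc ∑ s, ∑ i, μ s * Λ s i = ∑ s, μ s * ∑ i, Λ s i := by
          simp [Finset.mul_sum]
      _ = 1 := by simp [hΛrow, hμsum]
  have h1 : (∑ s, μ s * f s) = ∑ s, (ν ᵥ* Λ⁻¹) s * f s := by
    rw [hν, vecMul_vecMul, Matrix.mul_nonsing_inv _ hΛinv, vecMul_one]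
  have h2 : (∑ m, q m * ∑ s, (ν ᵥ* Λs m) s * f s)
      = ∑ s, (ν ᵥ* (∑ m, q m • Λs m)) s * f s := by
    simp only [vecMul, dotProduct, Matrix.sum_apply, Matrix.smul_apply, smul_eq_mul,
      Finset.mul_sum, Finset.sum_mul]
    rw [Finset.sum_comm]
    refine Finset.sum_congr rfl fun s _ => ?_
    rw [Finset.sum_comm]
    refine Finset.sum_congr rfl fun m _ => ?_
    refine Finset.sum_congr rfl fun i _ => ?_
    ring
  rw [h1, h2, ← Finset.sum_sub_distrib]
  have h3 : ∀ s, (ν ᵥ* Λ⁻¹) s * f s - (ν ᵥ* (∑ m, q m • Λs m)) s * f s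
      = (ν ᵥ* M) s * f s := by
    intro s
    rw [hMdef, Matrix.vecMul_sub]
    simp [sub_mul]
  simp only [h3]
  have h4 : ∀ s, (ν ᵥ* M) s * f s = ∑ i, ν i * (M i s * f s) := by
    intro s
    simp [vecMul, dotProduct, Finset.sum_mul, mul_assoc]
  simp only [h4]
  rw [Finset.sum_comm]
  calc |∑ i, ∑ s, ν i * (M i s * f s)|
      ≤ ∑ i, |∑ s, ν i * (M i s * f s)| := Finset.abs_sum_le_sum_abs _ _
    _ = ∑ i, ν i * |∑ s, M i s * f s| := by
        refine Finset.sum_congr rfl fun i _ => ?_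
        rw [← Finset.mul_sum, abs_mul, abs_of_nonneg (hνnn i)]
    _ ≤ ∑ i, ν i * (ε * C) := by
        refine Finset.sum_le_sum fun i _ => ?_
        refine mul_le_mul_of_nonneg_left ?_ (hνnn i)
        calc |∑ s, M i s * f s| ≤ ∑ s, |M i s * f s| := Finset.abs_sum_le_sum_abs _ _
          _ ≤ ∑ s, |M i s| * C := by
              refine Finset.sum_le_sum fun s _ => ?_
              rw [abs_mul]
              exact mul_le_mul_of_nonneg_left (hf s) (abs_nonneg _)
          _ = (∑ s, |M i s|) * C := by rw [Finset.sum_mul]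
          _ ≤ ε * C := mul_le_mul_of_nonneg_right (hM i) hC
    _ = ε * C := by rw [← Finset.sum_mul, hνsum, one_mul]
end

section
/- Let σ ∈ ℝ with σ ≠ 1/2, let k ∈ ℕ, and let f : (Fin k → Bool) → ℝ. Define weights w(false) = (1−σ)/(1−2σ), w(true) = −σ/(1−2σ) and u(false) = 1−σ, u(true) = σ, and define g : (Fin k → Bool) → ℝ by g(y) = Σ_{e : Fin k → Bool} (Π_{i} w(e(i))) · f(y ⊕ e), where (y ⊕ e)(i) = xor(y(i), e(i)) denotes bitwise XOR. Then for every x : Fin k → Bool, Σ_{e' : Fin k → Bool} (Π_{i} u(e'(i))) · g(x ⊕ e') = f(x). -/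
/-!
Flipping bits is convolution on the group `(ι → Bool, xor)`, and the product weights
`e ↦ ∏ i, p (e i)` turn convolution into a coordinatewise operation. So the identity reduces to
one bit: the two-point weights `u` and `w` are convolution inverses, i.e.
`∑ b, u b * w (b ^^ c) = [c = false]`, which is a direct computation.
-/

open Finset

section XorConvolution

variable {ι R : Type*} [Fintype ι] [DecidableEq ι] [CommSemiring R]

theorem sum_prod_mul_xor_eq_ite (p q : Bool → R)
    (hpq : ∀ c, ∑ b, p b * q (b ^^ c) = if c = false then 1 else 0) (d : ι → Bool) :
    ∑ e : ι → Bool, ∏ i, p (e i) * q (e i ^^ d i) = if d = fun _ => false then 1 else 0 := by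
  rw [← Fintype.prod_sum (fun i b => p b * q (b ^^ d i))]
  simp only [hpq, prod_boole, mem_univ, true_implies, funext_iff]

theorem sum_prod_mul_xor_reindex (q : Bool → R) (f : (ι → Bool) → R) (x a : ι → Bool) :
    ∑ e : ι → Bool, (∏ i, q (e i)) * f (fun i => x i ^^ a i ^^ e i) =
      ∑ d : ι → Bool, (∏ i, q (a i ^^ d i)) * f (fun i => x i ^^ d i) := by
  have hflip : Function.Involutive fun (d : ι → Bool) i => a i ^^ d i :=
    fun d => by funext i; simp
  refine (Equiv.sum_comp ⟨_, _, hflip.leftInverse, hflip.rightInverse⟩ _).symm.trans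
    (sum_congr rfl fun d _ => ?_)
  simp

theorem sum_prod_mul_sum_prod_mul_xor (p q : Bool → R)
    (hpq : ∀ c, ∑ b, p b * q (b ^^ c) = if c = false then 1 else 0)
    (f : (ι → Bool) → R) (x : ι → Bool) :
    ∑ a : ι → Bool, (∏ i, p (a i)) *
        ∑ e : ι → Bool, (∏ i, q (e i)) * f (fun i => x i ^^ a i ^^ e i) = f x := by
  simp_rw [sum_prod_mul_xor_reindex, mul_sum, ← mul_assoc, ← prod_mul_distrib]
  rw [sum_comm]
  simp_rw [← sum_mul, sum_prod_mul_xor_eq_ite p q hpq, ite_mul, one_mul, zero_mul]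
  simp

end XorConvolution

theorem bitFlip_weights_sum_mul_xor (σ : ℝ) (hσ : σ ≠ 1 / 2) (w u : Bool → ℝ)
    (hwf : w false = (1 - σ) / (1 - 2 * σ)) (hwt : w true = -σ / (1 - 2 * σ))
    (huf : u false = 1 - σ) (hut : u true = σ) (c : Bool) :
    ∑ b, u b * w (b ^^ c) = if c = false then 1 else 0 := by
  -- the denominator in the shape `field_simp` normalises `1 - 2 * σ` to
  have h2σ : 1 - σ * 2 ≠ 0 := fun h => hσ (by linarith)
  cases c
  · simp only [Fintype.sum_bool, Bool.xor_false, huf, hut, hwf, hwt, if_true]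
    field_simp
    ring
  · simp only [Fintype.sum_bool, Bool.xor_true, Bool.not_false, Bool.not_true, huf, hut, hwf,
      hwt, reduceCtorEq, if_false]
    field_simp
    ring

theorem stmt4 (σ : ℝ) (hσ : σ ≠ 1 / 2) (k : ℕ) (f : (Fin k → Bool) → ℝ)
    (w u : Bool → ℝ)
    (hwf : w false = (1 - σ) / (1 - 2 * σ)) (hwt : w true = -σ / (1 - 2 * σ))
    (huf : u false = 1 - σ) (hut : u true = σ)
    (g : (Fin k → Bool) → ℝ)
    (hg : ∀ y : Fin k → Bool,
      g y = ∑ e : Fin k → Bool, (∏ i, w (e i)) * f (fun i => xor (y i) (e i)))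
    (x : Fin k → Bool) :
    ∑ e' : Fin k → Bool, (∏ i, u (e' i)) * g (fun i => xor (x i) (e' i)) = f x := by
  simp_rw [hg]
  exact sum_prod_mul_sum_prod_mul_xor u w
    (bitFlip_weights_sum_mul_xor σ hσ w u hwf hwt huf hut) f x
end

section
/- Let δ ∈ ℝ with δ ≠ 1. Define q : ℕ → ℝ by q(j) = (1/(1−δ))·(−δ/(1−δ))^j, and define p : ℕ → ℝ by p(0) = 1−δ, p(1) = δ, and p(i) = 0 for all i ≥ 2. Then for every ℓ ∈ ℕ, the convolution Σ_{j=0}^{ℓ} q(j)·p(ℓ−j) equals 1 if ℓ = 0 and equals 0 if ℓ ≥ 1. -/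
open Finset

theorem sum_range_mul_sub_eq_of_support_subset_two {R : Type*} [NonUnitalNonAssocSemiring R]
    (q p : ℕ → R) (hp : ∀ i : ℕ, 2 ≤ i → p i = 0) (n : ℕ) :
    ∑ j ∈ range (n + 2), q j * p (n + 1 - j) = q n * p 1 + q (n + 1) * p 0 := by
  have hfar : ∑ j ∈ range n, q j * p (n + 1 - j) = 0 :=
    sum_eq_zero fun j hj => by
      rw [hp (n + 1 - j) (by have := mem_range.mp hj; omega), mul_zero]
  rw [sum_range_succ, sum_range_succ, hfar, zero_add, Nat.sub_self,
    show n + 1 - n = 1 by omega]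

theorem stmt7 (δ : ℝ) (hδ : δ ≠ 1) (q p : ℕ → ℝ)
    (hq : ∀ j : ℕ, q j = (1 / (1 - δ)) * (-δ / (1 - δ)) ^ j)
    (hp0 : p 0 = 1 - δ) (hp1 : p 1 = δ) (hp : ∀ i : ℕ, 2 ≤ i → p i = 0) (ℓ : ℕ) :
    ∑ j ∈ Finset.range (ℓ + 1), q j * p (ℓ - j) = if ℓ = 0 then 1 else 0 := by
  have hδ' : 1 - δ ≠ 0 := sub_ne_zero.mpr hδ.symm
  cases ℓ with
  | zero =>
    simp only [zero_add, sum_range_one, Nat.sub_self, hq, pow_zero, hp0, if_true]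
    field_simp
  | succ n =>
    -- the ratio `-δ / (1 - δ)` of `q` is chosen so that `q (n + 1) * p 0 = -(q n * p 1)`
    rw [sum_range_mul_sub_eq_of_support_subset_two q p hp, hq, hq, hp0, hp1, pow_succ,
      if_neg n.succ_ne_zero]
    field_simp
    ring
end

section
/- Let p ∈ ℝ with 0 < p < 1, and let t ∈ ℝ satisfy 0 < t ≤ min{1, p/(4·(1−p))}. Then (1−p)·exp(t) < 1 and p/(1 − (1−p)·exp(t)) < exp(4·((1−p)/p)·t). -/
theorem stmt12 (p t : ℝ) (hp0 : 0 < p) (hp1 : p < 1)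
    (ht0 : 0 < t) (ht : t ≤ min 1 (p / (4 * (1 - p)))) :
    (1 - p) * Real.exp t < 1 ∧
    p / (1 - (1 - p) * Real.exp t) < Real.exp (4 * ((1 - p) / p) * t) := by
  have hq0 : (0:ℝ) < 1 - p := by linarith
  have ht1 : t ≤ 1 := le_trans ht (min_le_left _ _)
  have ht2 : t ≤ p / (4 * (1 - p)) := le_trans ht (min_le_right _ _)
  have h4qt : 4 * (1 - p) * t ≤ p := by
    rw [le_div_iff₀ (by positivity)] at ht2; linarith [ht2]
  -- exp t < 1 + 2t on (0,1] via convexity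
  have hexp : Real.exp t < 1 + 2 * t := by
    have hc := convexOn_exp.2 (Set.mem_univ (0:ℝ)) (Set.mem_univ (1:ℝ))
      (by linarith : (0:ℝ) ≤ 1 - t) (le_of_lt ht0) (by ring)
    simp only [smul_eq_mul, mul_zero, mul_one, zero_add, Real.exp_zero] at hc
    have he : Real.exp 1 < 2.7182818286 := Real.exp_one_lt_d9
    nlinarith [hc, mul_pos ht0 (by norm_num : (0:ℝ) < 2.7182818286)]
  have h1 : (1 - p) * Real.exp t < 1 := by
    nlinarith [mul_lt_mul_of_pos_left hexp hq0]
  refine ⟨h1, ?_⟩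
  have hD : 0 < 1 - (1 - p) * Real.exp t := by linarith
  have hlt : p / (1 - (1 - p) * Real.exp t) < 1 + 4 * ((1 - p) / p) * t := by
    rw [div_lt_iff₀ hD]
    have hdiv : 4 * ((1 - p) / p) * t * p = 4 * (1 - p) * t := by
      field_simp
    nlinarith [mul_lt_mul_of_pos_left hexp hq0, mul_pos hq0 ht0,
      mul_nonneg (mul_nonneg (by linarith : (0:ℝ) ≤ 1 - p) ht0.le)
        (by linarith : (0:ℝ) ≤ p - 4 * (1 - p) * t)]
  have hpos : 4 * ((1 - p) / p) * t ≠ 0 := by positivity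
  have := Real.add_one_lt_exp hpos
  linarith
end

section
/- Let a, b, c, d ∈ ℝ with c + d ≠ 0 and a + b = c + d. Define g : ℝ → ℝ by g(α) = |(a·e^{iα} + b)/(c·e^{iα} + d)| − 1, where |·| is the complex modulus and e^{iα} = exp(i·α) ∈ ℂ. Then g(α) = O(α²) as α → 0; that is, the function α ↦ g(α) is big-O of α ↦ α² in the neighborhood filter of 0. -/
open Asymptotics Filter Complex

/-! Write `N(α) = a e^{iα} + b` and `D(α) = c e^{iα} + d`. For real `a, b` one has
`|a e^{iα} + b|² = (a + b)² - 2ab (1 - cos α)`, so `a + b = c + d` makes `|N|² - |D|²` a multiple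
of `1 - cos α = O(α²)`. Since `|D(α)|² → (c + d)² ≠ 0`, the quantity `|N/D|² - 1` is `O(α²)`, and
`|r - 1| ≤ |r² - 1|` for `r ≥ 0` transfers this to `|N/D| - 1`. -/

lemma normSq_ofReal_mul_exp_add (a b α : ℝ) :
    normSq ((a : ℂ) * exp (I * α) + b) = (a + b) ^ 2 - 2 * a * b * (1 - Real.cos α) := by
  rw [mul_comm I, exp_mul_I]
  simp only [normSq_apply, add_re, add_im, mul_re, mul_im, ofReal_re, ofReal_im, I_re, I_im,
    cos_ofReal_re, sin_ofReal_re, cos_ofReal_im, sin_ofReal_im, mul_zero, zero_mul, mul_one,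
    sub_self, sub_zero, add_zero, zero_add]
  linear_combination a ^ 2 * Real.sin_sq_add_cos_sq α

lemma abs_sub_one_le_abs_sq_sub_one {r : ℝ} (hr : 0 ≤ r) : |r - 1| ≤ |r ^ 2 - 1| := by
  rw [show r ^ 2 - 1 = (r - 1) * (r + 1) by ring, abs_mul]
  exact le_mul_of_one_le_right (abs_nonneg _) (by rw [abs_of_nonneg (by positivity)]; linarith)

lemma one_sub_cos_isBigO_sq (l : Filter ℝ) :
    (fun α : ℝ => 1 - Real.cos α) =O[l] (fun α : ℝ => α ^ 2) := by
  refine IsBigO.of_bound (1 / 2) (Eventually.of_forall fun α => ?_)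
  rw [Real.norm_eq_abs, Real.norm_eq_abs, abs_of_nonneg (sub_nonneg.2 (Real.cos_le_one α)),
    abs_of_nonneg (sq_nonneg α)]
  linarith [Real.one_sub_sq_div_two_le_cos (x := α)]

lemma sq_norm_div_sub_one {z w : ℂ} (hw : normSq w ≠ 0) :
    ‖z / w‖ ^ 2 - 1 = (normSq z - normSq w) / normSq w := by
  rw [Complex.sq_norm, normSq_div]
  field_simp

theorem stmt16 (a b c d : ℝ) (hcd : c + d ≠ 0) (hab : a + b = c + d) :
    (fun α : ℝ =>
        ‖((a : ℂ) * Complex.exp (Complex.I * α) + b) /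
          ((c : ℂ) * Complex.exp (Complex.I * α) + d)‖ - 1) =O[nhds 0]
      (fun α : ℝ => α ^ 2) := by
  set D : ℝ → ℝ := fun α => normSq ((c : ℂ) * exp (I * α) + d)
  have hD : Tendsto D (nhds 0) (nhds ((c + d) ^ 2)) := by
    have : Continuous D := by simp only [D, normSq_ofReal_mul_exp_add]; fun_prop
    simpa [D, normSq_ofReal_mul_exp_add] using this.tendsto 0
  have hD0 : (c + d) ^ 2 ≠ 0 := pow_ne_zero 2 hcd
  have hbdd : (fun α => 2 * (c * d - a * b) / D α) =O[nhds 0] (fun _ => (1 : ℝ)) :=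
    (tendsto_const_nhds.div hD hD0).isBigO_one ℝ
  have hsq : (fun α : ℝ => ‖((a : ℂ) * exp (I * α) + b) / ((c : ℂ) * exp (I * α) + d)‖ ^ 2 - 1)
      =O[nhds 0] (fun α : ℝ => α ^ 2) := by
    refine ((one_sub_cos_isBigO_sq _).mul hbdd).congr' ?_ (by simp)
    filter_upwards [hD.eventually_ne hD0] with α hα
    rw [sq_norm_div_sub_one hα]
    simp only [D, normSq_ofReal_mul_exp_add] at hα ⊢
    rw [hab]
    field_simp
    ring
  refine IsBigO.trans (IsBigO.of_bound 1 (Eventually.of_forall fun α => ?_)) hsq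
  rw [Real.norm_eq_abs, Real.norm_eq_abs, one_mul]
  exact abs_sub_one_le_abs_sq_sub_one (norm_nonneg _)
end
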